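/- If H ≤ PL₊(I) is generated by a finite set of nice generators, then H equals its own split group: S(H) = H. Equivalently, every one-bump factor of every element of H already lies in H. -/

import Mathlib

/-!
The support of each generator `z ∈ Z` is its unique orbital `A_z`, and by (Z1) these orbitals are
pairwise nested or disjoint. We induct on `|Z|`. A bump of `f ∈ ⟨Z⟩` meets the orbital `A_t` of a
generator `t` that is maximal among those meeting it; the other generators are supported off the
closure of `A_t`, so the bump lies in `A_t` and is a bump of an element `u` of the group generated
by `t` and the set `S` of generators with orbital strictly inside `A_t`. By (Z2) and (Z3), `S` is
supported in the fundamental domain `(r, r·t)`, so `u = c · t^e` where `c` is generated by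
conjugates `t^-k s t^k`, each supported in a single rung `(r·t^k, r·t^(k+1))`. If `e ≠ 0`, `u`
shifts rungs and has no fixed point in `A_t`, so the bump is `u` itself. If `e = 0`, the bump lies
in one rung; conjugating it to the `0`-th rung makes it a bump of an element of `⟨S⟩`, and the
induction hypothesis applies. Finally, every generator is its own one-bump factor, so
`⟨Z⟩ ≤ S(⟨Z⟩)`.
-/

open Set

namespace PLPaper

/-- We model `PL₊(I)` inside the group of bijections of `ℝ` with *opposite*
composition, so that the group acts on `ℝ` on the right:
`x · (g * h) = (x · g) · h`. -/
abbrev PermR : Type := (Equiv.Perm ℝ)ᵐᵒᵖ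

/-- The (right) action of `g` on the point `x`. -/
def ap (g : PermR) (x : ℝ) : ℝ := g.unop x

/-- `g` is affine on a neighbourhood of `x`. -/
def IsLocallyAffineAt (g : PermR) (x : ℝ) : Prop :=
  ∃ m b : ℝ, ∀ᶠ y in nhds x, ap g y = m * y + b

/-- The breakpoints of `g`: points of `(0,1)` where `g` is not locally affine
(equivalently, for a PL map, where the derivative fails to exist). -/
def Breakpoints (g : PermR) : Set ℝ :=
  {x ∈ Ioo (0:ℝ) 1 | ¬ IsLocallyAffineAt g x}

/-- `g` is an orientation-preserving piecewise-linear homeomorphism of `[0,1]`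
(extended by the identity to all of `ℝ`), with finitely many breakpoints. -/
def IsPL (g : PermR) : Prop :=
  StrictMono (ap g) ∧ (∀ x ∉ Ioo (0:ℝ) 1, ap g x = x) ∧ (Breakpoints g).Finite

/-- The support of `g`. -/
def Supp (g : PermR) : Set ℝ := {x | ap g x ≠ x}

/-- `(a,b)` is an orbital of `g`, i.e. a connected component of `Supp g`. -/
def IsOrbital (g : PermR) (a b : ℝ) : Prop :=
  a < b ∧ Ioo a b ⊆ Supp g ∧ a ∉ Supp g ∧ b ∉ Supp g

/-- The support of a subgroup `G`. -/
def GSupp (G : Subgroup PermR) : Set ℝ := ⋃ g ∈ (G : Set PermR), Supp g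

/-- `(a,b)` is an orbital of the group `G`, i.e. a connected component of its support. -/
def IsGroupOrbital (G : Subgroup PermR) (a b : ℝ) : Prop :=
  a < b ∧ Ioo a b ⊆ GSupp G ∧ a ∉ GSupp G ∧ b ∉ GSupp G

/-- The pair `g, h` carries a transition chain: orbitals `(a,b)` of `g` and
`(c,d)` of `h` with `a < c < b < d`. -/
def ElemsTransitionChain (g h : PermR) : Prop :=
  ∃ a b c d : ℝ, IsOrbital g a b ∧ IsOrbital h c d ∧ a < c ∧ c < b ∧ b < d

/-- The pair `g, h` carries a one-sided overlap: orbitals `(a,b)` of `g` and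
`(a,c)` of `h`, or `(a,b)` of `g` and `(c,b)` of `h`, where `a < c < b`. -/
def ElemsOneSidedOverlap (g h : PermR) : Prop :=
  ∃ a b c : ℝ, a < c ∧ c < b ∧
    ((IsOrbital g a b ∧ IsOrbital h a c) ∨ (IsOrbital g a b ∧ IsOrbital h c b))

def AdmitsTransitionChain (G : Subgroup PermR) : Prop :=
  ∃ g ∈ G, ∃ h ∈ G, ElemsTransitionChain g h

def AdmitsOneSidedOverlap (G : Subgroup PermR) : Prop :=
  ∃ g ∈ G, ∃ h ∈ G, ElemsOneSidedOverlap g h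

/-- `G` admits a bad overlap: orbitals `A` of `f ∈ G` and `B` of `g ∈ G` which
intersect, are distinct, and neither closure is contained in the other orbital. -/
def AdmitsBadOverlap (G : Subgroup PermR) : Prop :=
  ∃ f ∈ G, ∃ g ∈ G, ∃ a b c d : ℝ, IsOrbital f a b ∧ IsOrbital g c d ∧
    (Ioo a b ∩ Ioo c d).Nonempty ∧ Ioo a b ≠ Ioo c d ∧
    ¬ Icc a b ⊆ Ioo c d ∧ ¬ Icc c d ⊆ Ioo a b

/-- A tower: a set of signed orbitals `((a,b), g)` with pairwise nested orbitals,
where equal orbitals force equal signatures. -/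
def IsTower (T : Set ((ℝ × ℝ) × PermR)) : Prop :=
  (∀ p ∈ T, IsOrbital p.2 p.1.1 p.1.2) ∧
  (∀ p ∈ T, ∀ q ∈ T,
      Ioo p.1.1 p.1.2 ⊆ Ioo q.1.1 q.1.2 ∨ Ioo q.1.1 q.1.2 ⊆ Ioo p.1.1 p.1.2) ∧
  (∀ p ∈ T, ∀ q ∈ T, p.1 = q.1 → p.2 = q.2)

/-- `G` admits the tower `T` if `T` is a tower all of whose signatures lie in `G`. -/
def AdmitsTower (G : Subgroup PermR) (T : Set ((ℝ × ℝ) × PermR)) : Prop :=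
  IsTower T ∧ ∀ p ∈ T, p.2 ∈ G

def AdmitsInfiniteTower (G : Subgroup PermR) : Prop :=
  ∃ T : Set ((ℝ × ℝ) × PermR), AdmitsTower G T ∧ T.Infinite

/-- The set of breakpoints of the elements of a set `S`. -/
def BreakSet (S : Set PermR) : Set ℝ := ⋃ g ∈ S, Breakpoints g

/-- The derived length of a group: the least `n` with `derivedSeries G n = ⊥`. -/
noncomputable def derivedLength (G : Type*) [Group G] : ℕ :=
  sInf {n : ℕ | derivedSeries G n = ⊥}

/-- `Z` is a set of nice generators:
(Z0) each `h ∈ Z` has exactly one orbital;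
(Z1) no pair of elements of `Z` forms a transition chain or a one-sided overlap;
(Z2) distinct elements of `Z` have distinct orbitals;
(Z3) for each `h ∈ Z` there is `r ∈ A_h` such that every orbital of an element
of `Z` properly contained in `A_h` is contained in `(r, r·h)`. -/
def IsNiceSet (Z : Set PermR) : Prop :=
  (∀ h ∈ Z, (∃ a b : ℝ, IsOrbital h a b) ∧
    ∀ a b a' b' : ℝ, IsOrbital h a b → IsOrbital h a' b' → a = a' ∧ b = b') ∧
  (∀ g ∈ Z, ∀ h ∈ Z, ¬ ElemsTransitionChain g h ∧ ¬ ElemsOneSidedOverlap g h) ∧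
  (∀ g ∈ Z, ∀ h ∈ Z, g ≠ h → ∀ a b : ℝ, IsOrbital g a b → ¬ IsOrbital h a b) ∧
  (∀ h ∈ Z, ∀ a b : ℝ, IsOrbital h a b → ∃ r ∈ Ioo a b,
    ∀ h' ∈ Z, ∀ a' b' : ℝ, IsOrbital h' a' b' → Ioo a' b' ⊂ Ioo a b →
      Ioo a' b' ⊆ Ioo r (ap h r))

/-- `g` is the one-bump factor of `f` over the orbital `(a,b)` of `f`:
`g` agrees with `f` on `(a,b)` and is the identity elsewhere. -/
def IsOneBumpFactor (g f : PermR) (a b : ℝ) : Prop :=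
  IsOrbital f a b ∧ (∀ x ∈ Ioo a b, ap g x = ap f x) ∧ (∀ x ∉ Ioo a b, ap g x = x)

/-- `g` is a one-bump factor of `f`. -/
def IsFactorOf (g f : PermR) : Prop := ∃ a b : ℝ, IsOneBumpFactor g f a b

/-- `((a,b), g)` is a factor signed orbital associated to (an element of) `G`. -/
def AssociatedFactor (G : Subgroup PermR) (a b : ℝ) (g : PermR) : Prop :=
  ∃ f ∈ G, IsOneBumpFactor g f a b

/-- The split group `S(G)`: the subgroup generated by the one-bump factors of
all elements of `G`. -/
def SplitGroup (G : Subgroup PermR) : Subgroup PermR :=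
  Subgroup.closure {g : PermR | ∃ f ∈ G, IsFactorOf g f}

open Subgroup

section Basic

lemma ap_mul (u v : PermR) (x : ℝ) : ap (u * v) x = ap v (ap u x) := rfl

lemma ap_one (x : ℝ) : ap 1 x = x := rfl

@[simp] lemma ap_inv_ap (u : PermR) (x : ℝ) : ap u⁻¹ (ap u x) = x :=
  u.unop.symm_apply_apply x

@[simp] lemma ap_ap_inv (u : PermR) (x : ℝ) : ap u (ap u⁻¹ x) = x :=
  u.unop.apply_symm_apply x

lemma ap_injective (u : PermR) : Function.Injective (ap u) := u.unop.injective

lemma ext_ap {u v : PermR} (h : ∀ x, ap u x = ap v x) : u = v :=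
  MulOpposite.unop_injective (Equiv.ext h)

lemma ap_eq_self_of_notMem_supp {u : PermR} {x : ℝ} (h : x ∉ Supp u) : ap u x = x :=
  not_not.mp h

lemma supp_one : Supp 1 = ∅ := by simp [Supp, ap_one]

lemma supp_inv (u : PermR) : Supp u⁻¹ = Supp u := by
  ext x
  simp only [Supp, mem_ofPred_eq, not_iff_not]
  rw [← (ap_injective u).eq_iff, ap_ap_inv, eq_comm]

lemma ap_mem_supp {u : PermR} {x : ℝ} (h : x ∈ Supp u) : ap u x ∈ Supp u :=
  fun he => h (ap_injective u he)

lemma supp_mul_subset (u v : PermR) : Supp (u * v) ⊆ Supp u ∪ Supp v := by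
  intro x hx
  by_contra hc
  simp only [mem_union, not_or] at hc
  exact hx (by rw [ap_mul, ap_eq_self_of_notMem_supp hc.1, ap_eq_self_of_notMem_supp hc.2])

lemma ap_mem_of_supp_subset {u : PermR} {D : Set ℝ} (hu : Supp u ⊆ D) {x : ℝ}
    (hx : x ∈ D) : ap u x ∈ D := by
  by_cases h : x ∈ Supp u
  · exact hu (ap_mem_supp h)
  · rwa [ap_eq_self_of_notMem_supp h]

lemma supp_subset_of_mem_closure {Y : Set PermR} {u : PermR} (hu : u ∈ closure Y) :
    Supp u ⊆ ⋃ y ∈ Y, Supp y := by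
  induction hu using closure_induction with
  | mem y hy => exact subset_biUnion_of_mem hy
  | one => simp [supp_one]
  | mul u v _ _ hu hv => exact (supp_mul_subset u v).trans (union_subset hu hv)
  | inv u _ hu => rwa [supp_inv]

lemma supp_subset_of_mem_closure' {Y : Set PermR} {D : Set ℝ} (hY : ∀ y ∈ Y, Supp y ⊆ D)
    {u : PermR} (hu : u ∈ closure Y) : Supp u ⊆ D :=
  (supp_subset_of_mem_closure hu).trans (iUnion₂_subset hY)

lemma mem_supp_conj {c z : PermR} {x : ℝ} : x ∈ Supp (c⁻¹ * z * c) ↔ ap c⁻¹ x ∈ Supp z := by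
  simp only [Supp, mem_ofPred_eq, ap_mul, not_iff_not]
  rw [← (ap_injective c⁻¹).eq_iff, ap_inv_ap]

lemma conj_mem_closure {Y Y' : Set PermR} {c : PermR} (hmap : ∀ y ∈ Y, c * y * c⁻¹ ∈ Y')
    {u : PermR} (hu : u ∈ closure Y) : c * u * c⁻¹ ∈ closure Y' := by
  have := mem_map_of_mem (MulAut.conj c).toMonoidHom hu
  rw [MonoidHom.map_closure] at this
  exact closure_mono (image_subset_iff.mpr hmap) this

lemma closure_insert_inv_le (h : PermR) (S : Set PermR) :
    closure (insert h⁻¹ S) ≤ closure (insert h S) :=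
  (closure_le _).mpr <| insert_subset (inv_mem (subset_closure (mem_insert h S)))
    ((subset_insert h S).trans subset_closure)

lemma closure_insert_inv (h : PermR) (S : Set PermR) :
    closure (insert h⁻¹ S) = closure (insert h S) :=
  le_antisymm (closure_insert_inv_le h S) (by simpa using closure_insert_inv_le h⁻¹ S)

end Basic

def strictMonoSubgroup : Subgroup PermR where
  carrier := {c | StrictMono (ap c)}
  one_mem' := strictMono_id
  mul_mem' hu hv := hv.comp hu
  inv_mem' {c} hc x y hxy := hc.lt_iff_lt.mp (by simpa using hxy)

lemma strictMono_ap_zpow {h : PermR} (hh : StrictMono (ap h)) (k : ℤ) :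
    StrictMono (ap (h ^ k)) :=
  strictMonoSubgroup.zpow_mem hh k

lemma strictMono_ap_inv {h : PermR} (hh : StrictMono (ap h)) : StrictMono (ap h⁻¹) :=
  strictMonoSubgroup.inv_mem hh

lemma continuous_ap {g : PermR} (hg : StrictMono (ap g)) : Continuous (ap g) := by
  rw [← StrictMono.coe_orderIsoOfSurjective (ap g) hg g.unop.surjective]
  exact OrderIso.continuous _

lemma isOpen_supp {g : PermR} (hg : StrictMono (ap g)) : IsOpen (Supp g) :=
  isOpen_ne_fun (continuous_ap hg) continuous_id

section Factors

lemma isOrbital_of_supp_eq {g : PermR} {a b : ℝ} (hab : a < b) (h : Supp g = Ioo a b) :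
    IsOrbital g a b :=
  ⟨hab, h.superset, by simp [h], by simp [h]⟩

lemma IsOrbital.eq_of_supp_eq {f : PermR} {a b p q : ℝ} (hf : IsOrbital f a b)
    (h : Supp f = Ioo p q) : a = p ∧ b = q := by
  obtain ⟨x, hx⟩ := nonempty_Ioo.mpr hf.1
  have hxpq : x ∈ Ioo p q := h ▸ hf.2.1 hx
  have ha := h ▸ hf.2.2.1
  have hb := h ▸ hf.2.2.2
  have hsub := h ▸ hf.2.1
  simp only [mem_Ioo, not_and_or, not_lt] at ha hb
  constructor
  · refine le_antisymm (ha.resolve_right (by linarith [hx.1, hxpq.2])) (not_lt.mp fun hap => ?_)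
    exact (hsub ⟨hap, hxpq.1.trans hx.2⟩).1.false
  · refine le_antisymm (not_lt.mp fun hqb => ?_) (hb.resolve_left (by linarith [hx.2, hxpq.1]))
    exact (hsub ⟨hx.1.trans hxpq.2, hqb⟩).2.false

lemma IsOneBumpFactor.eq_of_supp_eq {g f : PermR} {a b p q : ℝ} (hg : IsOneBumpFactor g f a b)
    (hf : Supp f = Ioo p q) : g = f := by
  obtain ⟨rfl, rfl⟩ := hg.1.eq_of_supp_eq hf
  refine ext_ap fun x => ?_
  by_cases hx : x ∈ Ioo a b
  · exact hg.2.1 x hx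
  · rw [hg.2.2 x hx, ap_eq_self_of_notMem_supp (hf ▸ hx)]

lemma isFactorOf_self_of_supp_eq {g : PermR} {a b : ℝ} (hab : a < b) (h : Supp g = Ioo a b) :
    IsFactorOf g g :=
  ⟨a, b, isOrbital_of_supp_eq hab h, fun _ _ => rfl,
    fun _ hx => ap_eq_self_of_notMem_supp (h ▸ hx)⟩

lemma IsOneBumpFactor.conj {g f c : PermR} {a b : ℝ} (hc : StrictMono (ap c))
    (hg : IsOneBumpFactor g f a b) :
    IsOneBumpFactor (c⁻¹ * g * c) (c⁻¹ * f * c) (ap c a) (ap c b) := by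
  obtain ⟨⟨hab, hsub, ha, hb⟩, hin, hout⟩ := hg
  have hmem : ∀ x, x ∈ Ioo (ap c a) (ap c b) ↔ ap c⁻¹ x ∈ Ioo a b := fun x => by
    conv_lhs => rw [← ap_ap_inv c x]
    simp only [mem_Ioo, hc.lt_iff_lt]
  refine ⟨⟨hc hab, fun x hx => mem_supp_conj.mpr (hsub ((hmem x).mp hx)), ?_, ?_⟩, ?_, ?_⟩
  · rwa [mem_supp_conj, ap_inv_ap]
  · rwa [mem_supp_conj, ap_inv_ap]
  · intro x hx
    simp only [ap_mul, hin _ ((hmem x).mp hx)]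
  · intro x hx
    simp only [ap_mul, hout _ (mt (hmem x).mpr hx), ap_ap_inv]

lemma IsOrbital.subset_Ioo {f : PermR} {a b p q x : ℝ} (hf : IsOrbital f a b)
    (hx : x ∈ Ioo a b ∩ Ioo p q) (hp : p ∉ Supp f) (hq : q ∉ Supp f) : Ioo a b ⊆ Ioo p q := by
  refine Ioo_subset_Ioo (not_lt.mp fun hap => hp ?_) (not_lt.mp fun hqb => hq ?_)
  · exact hf.2.1 ⟨hap, hx.2.1.trans hx.1.2⟩
  · exact hf.2.1 ⟨hx.1.1.trans hx.2.2, hqb⟩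

lemma IsOneBumpFactor.of_eqOn {g f u : PermR} {a b : ℝ} {D : Set ℝ}
    (hg : IsOneBumpFactor g f a b) (hu : Supp u ⊆ D) (he : EqOn (ap u) (ap f) D)
    (hab : Ioo a b ⊆ D) : IsOneBumpFactor g u a b := by
  have hfix : ∀ x, x ∉ Supp f → x ∉ Supp u := fun x hx => by
    by_cases hxD : x ∈ D
    · simpa [Supp, he hxD] using hx
    · exact fun h => hxD (hu h)
  obtain ⟨⟨hab', hsub, ha, hb⟩, hin, hout⟩ := hg
  refine ⟨⟨hab', fun x hx => ?_, hfix a ha, hfix b hb⟩, fun x hx => ?_, hout⟩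
  · simpa [Supp, he (hab hx)] using hsub hx
  · rw [hin x hx, he (hab hx)]

lemma exists_mem_closure_eqOn {Y₁ Y₂ : Set PermR} {D : Set ℝ} (h₁ : ∀ y ∈ Y₁, Supp y ⊆ D)
    (h₂ : ∀ y ∈ Y₂, Supp y ⊆ Dᶜ) {f : PermR} (hf : f ∈ closure (Y₁ ∪ Y₂)) :
    ∃ u ∈ closure Y₁, EqOn (ap u) (ap f) D := by
  have hD : ∀ u ∈ closure Y₁, ∀ x ∈ D, ap u x ∈ D := fun u hu _ =>
    ap_mem_of_supp_subset (supp_subset_of_mem_closure' h₁ hu)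
  induction hf using closure_induction with
  | mem y hy =>
    rcases hy with hy | hy
    · exact ⟨y, subset_closure hy, eqOn_refl _ _⟩
    · exact ⟨1, one_mem _, fun x hx =>
        (ap_eq_self_of_notMem_supp fun h => h₂ y hy h hx).symm⟩
  | one => exact ⟨1, one_mem _, eqOn_refl _ _⟩
  | mul f f' _ _ ih ih' =>
    obtain ⟨u, hu, he⟩ := ih
    obtain ⟨u', hu', he'⟩ := ih'
    refine ⟨u * u', mul_mem hu hu', fun x hx => ?_⟩
    rw [ap_mul, ap_mul, he' (hD u hu x hx), he hx]
  | inv f _ ih =>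
    obtain ⟨u, hu, he⟩ := ih
    refine ⟨u⁻¹, inv_mem hu, fun x hx => ?_⟩
    have hfu : ap f (ap u⁻¹ x) = x := by rw [← he (hD _ (inv_mem hu) x hx), ap_ap_inv]
    rw [← hfu, ap_inv_ap, hfu]

lemma exists_isOneBumpFactor_of_mem_closure_union {Y₁ Y₂ : Set PermR} {p q : ℝ}
    (h₁ : ∀ y ∈ Y₁, Supp y ⊆ Ioo p q) (h₂ : ∀ y ∈ Y₂, Supp y ⊆ (Icc p q)ᶜ)
    {f g : PermR} {a b x : ℝ} (hf : f ∈ closure (Y₁ ∪ Y₂)) (hg : IsOneBumpFactor g f a b)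
    (hx : x ∈ Ioo a b ∩ Ioo p q) : ∃ u ∈ closure Y₁, IsOneBumpFactor g u a b := by
  have hY : ∀ y ∈ Y₁ ∪ Y₂, Supp y ⊆ {p, q}ᶜ := by
    rintro y (hy | hy) w hw (rfl | rfl)
    exacts [(h₁ y hy hw).1.false, (h₁ y hy hw).2.false,
      h₂ y hy hw (left_mem_Icc.mpr (hx.2.1.le.trans hx.2.2.le)),
      h₂ y hy hw (right_mem_Icc.mpr (hx.2.1.trans hx.2.2).le)]
  have hpq := supp_subset_of_mem_closure' hY hf
  have hab := hg.1.subset_Ioo hx (fun h => hpq h (by simp)) (fun h => hpq h (by simp))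
  obtain ⟨u, hu, he⟩ := exists_mem_closure_eqOn h₁
    (fun y hy => (h₂ y hy).trans (compl_subset_compl.mpr Ioo_subset_Icc_self)) hf
  exact ⟨u, hu, hg.of_eqOn (supp_subset_of_mem_closure' h₁ hu) he hab⟩

end Factors

lemma StrictMono.Ioo_subset_compl_Icc {α : Type*} [Preorder α] {f : ℤ → α} (hf : StrictMono f)
    {k m : ℤ} (hkm : k ≠ m) : Ioo (f k) (f (k + 1)) ⊆ (Icc (f m) (f (m + 1)))ᶜ := by
  rintro y hy ⟨hmy, hym⟩
  rcases hkm.lt_or_gt with hlt | hgt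
  · exact lt_irrefl _ ((hy.2.trans_le (hf.monotone (by omega : k + 1 ≤ m))).trans_le hmy)
  · exact lt_irrefl _ ((hym.trans (hf.monotone (by omega : m + 1 ≤ k))).trans_lt hy.1)

lemma StrictMono.eq_of_mem_Ico {α : Type*} [Preorder α] {f : ℤ → α} (hf : StrictMono f)
    {x : α} {m n : ℤ} (hm : x ∈ Ico (f m) (f (m + 1))) (hn : x ∈ Ico (f n) (f (n + 1))) :
    m = n := by
  by_contra hne
  rcases lt_or_gt_of_ne hne with hlt | hgt
  · exact lt_irrefl _ ((hn.1.trans_lt hm.2).trans_le (hf.monotone (by omega : m + 1 ≤ n)))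
  · exact lt_irrefl _ ((hm.1.trans_lt hn.2).trans_le (hf.monotone (by omega : n + 1 ≤ m)))

section Ladder

variable {h : PermR} {S : Set PermR} {p q r : ℝ}

/-- When `h` moves `r` up, the rungs `[r·h^k, r·h^(k+1))` tile the orbital of `h`. -/
def ladder (h : PermR) (r : ℝ) (k : ℤ) : ℝ := ap (h ^ k) r

lemma ladder_zero : ladder h r 0 = r := by
  rw [ladder, zpow_zero, ap_one]

lemma ap_zpow_ladder (j k : ℤ) : ap (h ^ k) (ladder h r j) = ladder h r (j + k) := by
  rw [ladder, ladder, ← ap_mul, ← zpow_add]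

lemma ladder_succ (k : ℤ) : ladder h r (k + 1) = ap h (ladder h r k) := by
  rw [← ap_zpow_ladder, zpow_one]

lemma ladder_add_one_eq (k : ℤ) : ladder h r (k + 1) = ap (h ^ k) (ap h r) := by
  rw [ladder, add_comm, zpow_one_add, ap_mul]

lemma supp_zpow_subset (h : PermR) (k : ℤ) : Supp (h ^ k) ⊆ Supp h := by
  simpa using supp_subset_of_mem_closure (zpow_mem (subset_closure (mem_singleton h)) k)

lemma ladder_mem (hsupp : Supp h = Ioo p q) (hr : r ∈ Ioo p q) (k : ℤ) :
    ladder h r k ∈ Ioo p q :=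
  ap_mem_of_supp_subset ((supp_zpow_subset h k).trans hsupp.subset) hr

section Up

variable (hh : StrictMono (ap h)) (hsupp : Supp h = Ioo p q) (hr : r ∈ Ioo p q)
  (hup : r < ap h r)
include hh hsupp hr hup

/-- Otherwise the intermediate value theorem gives a fixed point of `h` inside its orbital. -/
lemma lt_ap_of_mem_Ioo {x : ℝ} (hx : x ∈ Ioo p q) : x < ap h x := by
  by_contra hle
  have hxs : x ∈ Supp h := hsupp ▸ hx
  obtain ⟨y, hy, hy0⟩ := isPreconnected_Ioo.intermediate_value (f := fun y => ap h y - y) hx hr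
    ((continuous_ap hh).sub continuous_id).continuousOn
    ⟨(sub_neg.mpr (lt_of_le_of_ne (not_lt.mp hle) hxs)).le, (sub_pos.mpr hup).le⟩
  exact (hsupp ▸ hy : y ∈ Supp h) (sub_eq_zero.mp hy0)

lemma ladder_strictMono : StrictMono (ladder h r) :=
  strictMono_int_of_lt_succ fun k => by
    rw [ladder_succ]
    exact lt_ap_of_mem_Ioo hh hsupp hr hup (ladder_mem hsupp hr k)

lemma exists_ladder_le {x : ℝ} (hx : x ∈ Ioo p q) : ∃ n, ladder h r n ≤ x := by
  by_contra! hlt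
  have hlb : ∀ y ∈ range (ladder h r), x ≤ y := forall_mem_range.mpr fun n => (hlt n).le
  have hbdd : BddBelow (range (ladder h r)) := ⟨x, hlb⟩
  set s := sInf (range (ladder h r))
  have hs : s ∈ Ioo p q :=
    ⟨hx.1.trans_le (le_csInf (range_nonempty _) hlb), (csInf_le hbdd ⟨0, rfl⟩).trans_lt (ladder_zero ▸ hr.2)⟩
  have hhs : ap h s ≤ s := le_csInf (range_nonempty _) <| forall_mem_range.mpr fun n => by
    rw [show n = n - 1 + 1 by ring, ladder_succ]
    exact hh.monotone (csInf_le hbdd ⟨_, rfl⟩)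
  exact hhs.not_gt (lt_ap_of_mem_Ioo hh hsupp hr hup hs)

lemma exists_lt_ladder {x : ℝ} (hx : x ∈ Ioo p q) : ∃ n, x < ladder h r n := by
  by_contra! hle
  have hub : ∀ y ∈ range (ladder h r), y ≤ x := forall_mem_range.mpr hle
  have hbdd : BddAbove (range (ladder h r)) := ⟨x, hub⟩
  set s := sSup (range (ladder h r))
  have hs : s ∈ Ioo p q :=
    ⟨(ladder_zero.symm ▸ hr.1 : p < ladder h r 0).trans_le (le_csSup hbdd ⟨0, rfl⟩),
      (csSup_le (range_nonempty _) hub).trans_lt hx.2⟩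
  have hs' : s ≤ ap h⁻¹ s := csSup_le (range_nonempty _) <| forall_mem_range.mpr fun n => by
    simpa [ladder_succ] using (strictMono_ap_inv hh).monotone (le_csSup hbdd ⟨n + 1, rfl⟩)
  have hhs : ap h s ≤ s := by simpa using hh.monotone hs'
  exact hhs.not_gt (lt_ap_of_mem_Ioo hh hsupp hr hup hs)

lemma exists_mem_Ico_ladder {x : ℝ} (hx : x ∈ Ioo p q) :
    ∃ N, x ∈ Ico (ladder h r N) (ladder h r (N + 1)) := by
  obtain ⟨n, hn⟩ := exists_ladder_le hh hsupp hr hup hx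
  obtain ⟨m, hm⟩ := exists_lt_ladder hh hsupp hr hup hx
  have hmono := ladder_strictMono hh hsupp hr hup
  obtain ⟨N, hN, hmax⟩ := Int.exists_greatest_of_bdd (P := fun k => ladder h r k ≤ x)
    ⟨m, fun k hk => (hmono.lt_iff_lt.mp (hk.trans_lt hm)).le⟩ ⟨n, hn⟩
  exact ⟨N, hN, not_le.mp fun h' => (hmax _ h').not_gt (lt_add_one N)⟩

end Up

end Ladder

section Levels

variable {h : PermR} {S : Set PermR} {p q r : ℝ}

/-- `S` transported to the `k`-th rung of the ladder of `h`. -/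
def conjLevel (h : PermR) (S : Set PermR) (k : ℤ) : Set PermR :=
  (fun z => (h ^ k)⁻¹ * z * h ^ k) '' S

lemma zpow_mul_mul_inv_mem_closure_levels (e : ℤ) {c : PermR}
    (hc : c ∈ closure (⋃ k, conjLevel h S k)) :
    h ^ e * c * (h ^ e)⁻¹ ∈ closure (⋃ k, conjLevel h S k) := by
  refine conj_mem_closure (fun y hy => ?_) hc
  obtain ⟨k, z, hz, rfl⟩ := mem_iUnion.mp hy
  exact mem_iUnion.mpr ⟨k - e, z, hz, by group⟩

lemma exists_eq_mul_zpow {f : PermR} (hf : f ∈ closure (insert h S)) :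
    ∃ c ∈ closure (⋃ k, conjLevel h S k), ∃ e : ℤ, f = c * h ^ e := by
  induction hf using closure_induction with
  | mem y hy =>
    rcases hy with rfl | hy
    · exact ⟨1, one_mem _, 1, by group⟩
    · exact ⟨y, subset_closure (mem_iUnion.mpr ⟨0, y, hy, by group⟩), 0, by group⟩
  | one => exact ⟨1, one_mem _, 0, by group⟩
  | mul f f' _ _ ih ih' =>
    obtain ⟨c, hc, e, rfl⟩ := ih
    obtain ⟨c', hc', e', rfl⟩ := ih'
    exact ⟨c * (h ^ e * c' * (h ^ e)⁻¹),
      mul_mem hc (zpow_mul_mul_inv_mem_closure_levels e hc'), e + e', by group⟩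
  | inv f _ ih =>
    obtain ⟨c, hc, e, rfl⟩ := ih
    exact ⟨h ^ (-e) * c⁻¹ * (h ^ (-e))⁻¹,
      zpow_mul_mul_inv_mem_closure_levels (-e) (inv_mem hc), -e, by group⟩

variable (hh : StrictMono (ap h)) (hS : ∀ z ∈ S, Supp z ⊆ Ioo r (ap h r))
include hh hS

lemma supp_subset_of_mem_conjLevel {k : ℤ} {y : PermR} (hy : y ∈ conjLevel h S k) :
    Supp y ⊆ Ioo (ladder h r k) (ladder h r (k + 1)) := by
  obtain ⟨z, hz, rfl⟩ := hy
  intro x hx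
  have hx' := hS z hz (mem_supp_conj.mp hx)
  rw [← ap_ap_inv (h ^ k) x, ladder_add_one_eq]
  exact ⟨strictMono_ap_zpow hh k hx'.1, strictMono_ap_zpow hh k hx'.2⟩

variable (hsupp : Supp h = Ioo p q) (hr : r ∈ Ioo p q) (hup : r < ap h r)
include hsupp hr hup

lemma supp_subset_of_mem_otherLevels {m : ℤ} {y : PermR}
    (hy : y ∈ ⋃ k ∈ ({m}ᶜ : Set ℤ), conjLevel h S k) :
    Supp y ⊆ (Icc (ladder h r m) (ladder h r (m + 1)))ᶜ := by
  obtain ⟨k, hk, hyk⟩ := mem_iUnion₂.mp hy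
  exact (supp_subset_of_mem_conjLevel hh hS hyk).trans
    (StrictMono.Ioo_subset_compl_Icc (ladder_strictMono hh hsupp hr hup) hk)

omit hh hS hsupp hr hup in
lemma levels_subset_union (m : ℤ) :
    ⋃ k, conjLevel h S k ⊆ conjLevel h S m ∪ ⋃ k ∈ ({m}ᶜ : Set ℤ), conjLevel h S k := by
  intro y hy
  obtain ⟨k, hk⟩ := mem_iUnion.mp hy
  by_cases hkm : k = m
  · exact Or.inl (hkm ▸ hk)
  · exact Or.inr (mem_biUnion hkm hk)

/-- The conjugates of `S` preserve every rung while `h^e` shifts rungs by `e`. -/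
lemma ap_mul_zpow_ne_self {c : PermR} (hc : c ∈ closure (⋃ k, conjLevel h S k)) {e : ℤ}
    (he : e ≠ 0) {x : ℝ} (hx : x ∈ Ioo p q) : ap (c * h ^ e) x ≠ x := by
  obtain ⟨N, hN⟩ := exists_mem_Ico_ladder hh hsupp hr hup hx
  have h₁ : ∀ y ∈ conjLevel h S N, Supp y ⊆ Ico (ladder h r N) (ladder h r (N + 1)) :=
    fun y hy => (supp_subset_of_mem_conjLevel hh hS hy).trans Ioo_subset_Ico_self
  obtain ⟨u, hu, hcu⟩ := exists_mem_closure_eqOn h₁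
    (fun y hy => (supp_subset_of_mem_otherLevels hh hS hsupp hr hup hy).trans
      (compl_subset_compl.mpr Ico_subset_Icc_self))
    (closure_mono (levels_subset_union N) hc)
  have hcx := hcu hN ▸ ap_mem_of_supp_subset (supp_subset_of_mem_closure' h₁ hu) hN
  have hshift : ap (c * h ^ e) x ∈ Ico (ladder h r (N + e)) (ladder h r (N + e + 1)) := by
    rw [ap_mul, ← ap_zpow_ladder, add_right_comm, ← ap_zpow_ladder]
    exact ⟨(strictMono_ap_zpow hh e).monotone hcx.1, strictMono_ap_zpow hh e hcx.2⟩
  intro hfix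
  rw [hfix] at hshift
  exact he (by linarith [StrictMono.eq_of_mem_Ico (ladder_strictMono hh hsupp hr hup) hN hshift])

lemma factor_mem_closure_insert_of_mem_closure_levels
    (IH : ∀ f ∈ closure S, ∀ g, IsFactorOf g f → g ∈ closure S) {c g : PermR} {a b : ℝ}
    (hc : c ∈ closure (⋃ k, conjLevel h S k)) (hg : IsOneBumpFactor g c a b) :
    g ∈ closure (insert h S) := by
  obtain ⟨x, hx⟩ := nonempty_Ioo.mpr hg.1.1
  obtain ⟨y, hy, hxy⟩ := mem_iUnion₂.mp (supp_subset_of_mem_closure hc (hg.1.2.1 hx))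
  obtain ⟨m, hym⟩ := mem_iUnion.mp hy
  obtain ⟨u, hu, hgu⟩ := exists_isOneBumpFactor_of_mem_closure_union
    (fun y hy => supp_subset_of_mem_conjLevel hh hS hy)
    (fun y hy => supp_subset_of_mem_otherLevels hh hS hsupp hr hup hy)
    (closure_mono (levels_subset_union m) hc) hg ⟨hx, supp_subset_of_mem_conjLevel hh hS hym hxy⟩
  have hu₀ : h ^ m * u * (h ^ m)⁻¹ ∈ closure S := by
    refine conj_mem_closure (fun y hy => ?_) hu
    obtain ⟨z, hz, rfl⟩ := hy
    simpa [mul_assoc] using hz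
  have hg₀ := hgu.conj (strictMono_ap_inv (strictMono_ap_zpow hh m))
  rw [inv_inv] at hg₀
  have hg₀S := IH _ hu₀ _ ⟨_, _, hg₀⟩
  have hhm : h ^ m ∈ closure (insert h S) := zpow_mem (subset_closure (mem_insert h S)) m
  rw [show g = (h ^ m)⁻¹ * (h ^ m * g * (h ^ m)⁻¹) * h ^ m by group]
  exact mul_mem (mul_mem (inv_mem hhm) (closure_mono (subset_insert h S) hg₀S)) hhm

end Levels

theorem factor_mem_closure_insert {h : PermR} {S : Set PermR} {p q r : ℝ}
    (hh : StrictMono (ap h)) (hsupp : Supp h = Ioo p q) (hr : r ∈ Ioo p q)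
    (hS : ∀ z ∈ S, Supp z ⊆ Ioo r (ap h r))
    (IH : ∀ f ∈ closure S, ∀ g, IsFactorOf g f → g ∈ closure S) {f g : PermR} {a b : ℝ}
    (hf : f ∈ closure (insert h S)) (hg : IsOneBumpFactor g f a b) :
    g ∈ closure (insert h S) := by
  wlog hup : r < ap h r generalizing h r
  · -- then `(r, r·h)` is empty, so `S` acts trivially and we may pass to `h⁻¹`
    have hdown : ap h r < r := lt_of_le_of_ne (not_lt.mp hup) (hsupp ▸ hr : r ∈ Supp h)
    rw [← closure_insert_inv] at hf ⊢
    refine this (strictMono_ap_inv hh) ((supp_inv h).trans hsupp)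
      (ap_mem_of_supp_subset hsupp.subset hr) (fun z hz => ?_) hf (by rwa [ap_inv_ap])
    exact (hS z hz).trans (by simp [Ioo_eq_empty_of_le hdown.le])
  obtain ⟨c, hc, e, rfl⟩ := exists_eq_mul_zpow hf
  rcases eq_or_ne e 0 with rfl | he
  · rw [zpow_zero, mul_one] at hg
    exact factor_mem_closure_insert_of_mem_closure_levels hh hS hsupp hr hup IH hc hg
  · have hsub : Supp (c * h ^ e) ⊆ Ioo p q := by
      refine supp_subset_of_mem_closure' (fun y hy => ?_) hf
      rcases hy with rfl | hy
      · exact hsupp.subset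
      · exact (hS y hy).trans
          (Ioo_subset_Ioo hr.1.le (ap_mem_of_supp_subset hsupp.subset hr).2.le)
    have hsuppf : Supp (c * h ^ e) = Ioo p q :=
      hsub.antisymm fun x hx => ap_mul_zpow_ne_self hh hS hsupp hr hup hc he hx
    rwa [hg.eq_of_supp_eq hsuppf]

section Nice

lemma exists_orbital_of_mem_supp {g : PermR} (hg : IsPL g) {x : ℝ} (hx : x ∈ Supp g) :
    ∃ a b, IsOrbital g a b ∧ x ∈ Ioo a b := by
  have hfix : IsClosed (Supp g)ᶜ := (isOpen_supp hg.1).isClosed_compl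
  have hx01 : x ∈ Ioo (0 : ℝ) 1 := by
    by_contra h
    exact hx (hg.2.1 x h)
  have h0 : (0 : ℝ) ∉ Supp g := fun h => h (hg.2.1 0 (by simp))
  have h1 : (1 : ℝ) ∉ Supp g := fun h => h (hg.2.1 1 (by simp))
  set L := Iic x ∩ (Supp g)ᶜ
  set R := Ici x ∩ (Supp g)ᶜ
  have hL : BddAbove L := ⟨x, fun y hy => hy.1⟩
  have hR : BddBelow R := ⟨x, fun y hy => hy.1⟩
  have haL : sSup L ∈ L := (isClosed_Iic.inter hfix).csSup_mem ⟨0, hx01.1.le, h0⟩ hL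
  have hbR : sInf R ∈ R := (isClosed_Ici.inter hfix).csInf_mem ⟨1, hx01.2.le, h1⟩ hR
  have hax : sSup L < x := lt_of_le_of_ne haL.1 fun h => haL.2 (h ▸ hx)
  have hxb : x < sInf R := lt_of_le_of_ne hbR.1 fun h => hbR.2 (h ▸ hx)
  refine ⟨sSup L, sInf R, ⟨hax.trans hxb, fun y hy => ?_, haL.2, hbR.2⟩, hax, hxb⟩
  by_contra hy'
  rcases le_total y x with hyx | hxy
  · exact (le_csSup hL ⟨hyx, hy'⟩).not_gt hy.1
  · exact (csInf_le hR ⟨hxy, hy'⟩).not_gt hy.2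

lemma subset_compl_Icc_of_disjoint {U : Set ℝ} (hU : IsOpen U) {p q : ℝ} (hpq : p < q)
    (hd : Disjoint U (Ioo p q)) : U ⊆ (Icc p q)ᶜ := by
  simpa [closure_Ioo hpq.ne] using (hd.closure_right hU).subset_compl_right

variable {Z : Set PermR}

lemma IsNiceSet.subset {S : Set PermR} (hZ : IsNiceSet Z) (hS : S ⊆ Z) : IsNiceSet S :=
  ⟨fun h hh => hZ.1 h (hS hh),
   fun g hg h hh => hZ.2.1 g (hS hg) h (hS hh),
   fun g hg h hh => hZ.2.2.1 g (hS hg) h (hS hh),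
   fun h hh a b hab => by
     obtain ⟨r, hr, hrall⟩ := hZ.2.2.2 h (hS hh) a b hab
     exact ⟨r, hr, fun h' hh' => hrall h' (hS hh')⟩⟩

lemma IsNiceSet.supp_eq_Ioo (hZ : IsNiceSet Z) {z : PermR} (hz : z ∈ Z) (hPL : IsPL z) :
    ∃ a b, a < b ∧ Supp z = Ioo a b := by
  obtain ⟨⟨a, b, hab⟩, huniq⟩ := hZ.1 z hz
  refine ⟨a, b, hab.1, subset_antisymm (fun x hx => ?_) hab.2.1⟩
  obtain ⟨c, d, hcd, hxcd⟩ := exists_orbital_of_mem_supp hPL hx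
  obtain ⟨rfl, rfl⟩ := huniq a b c d hab hcd
  exact hxcd

lemma IsNiceSet.supp_nested_or_disjoint (hZ : IsNiceSet Z) {g h : PermR} (hg : g ∈ Z)
    (hh : h ∈ Z) {a b c d : ℝ} (hab : a < b) (hcd : c < d) (hsg : Supp g = Ioo a b)
    (hsh : Supp h = Ioo c d) :
    Supp g ⊆ Supp h ∨ Supp h ⊆ Supp g ∨ Disjoint (Supp g) (Supp h) := by
  rw [hsg, hsh]
  by_cases h₁ : c ≤ a ∧ b ≤ d
  · exact Or.inl (Ioo_subset_Ioo h₁.1 h₁.2)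
  by_cases h₂ : a ≤ c ∧ d ≤ b
  · exact Or.inr (Or.inl (Ioo_subset_Ioo h₂.1 h₂.2))
  by_cases h₃ : b ≤ c ∨ d ≤ a
  · refine Or.inr (Or.inr (Ioo_disjoint_Ioo.mpr ?_))
    rcases h₃ with h₃ | h₃
    · exact (min_le_left b d).trans (h₃.trans (le_max_right a c))
    · exact (min_le_right b d).trans (h₃.trans (le_max_left a c))
  exfalso
  push Not at h₁ h₂ h₃
  have hog := isOrbital_of_supp_eq hab hsg
  have hoh := isOrbital_of_supp_eq hcd hsh
  rcases lt_trichotomy a c with hac | rfl | hca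
  · exact (hZ.2.1 g hg h hh).1 ⟨a, b, c, d, hog, hoh, hac, h₃.1, h₂ hac.le⟩
  · exact lt_asymm (h₁ le_rfl) (h₂ le_rfl)
  · exact (hZ.2.1 h hh g hg).1 ⟨c, d, a, b, hoh, hog, hca, h₃.2, h₁ hca.le⟩

lemma IsNiceSet.exists_supp_subset_Ioo (hZ : IsNiceSet Z)
    (hI : ∀ z ∈ Z, ∃ a b, a < b ∧ Supp z = Ioo a b) {t : PermR} (ht : t ∈ Z) {p q : ℝ}
    (hpq : p < q) (hst : Supp t = Ioo p q) :
    ∃ r ∈ Ioo p q, ∀ z ∈ Z, z ≠ t → Supp z ⊆ Supp t → Supp z ⊆ Ioo r (ap t r) := by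
  obtain ⟨r, hr, hZ3⟩ := hZ.2.2.2 t ht p q (isOrbital_of_supp_eq hpq hst)
  refine ⟨r, hr, fun z hz hzt hsub => ?_⟩
  obtain ⟨c, d, hcd, hsz⟩ := hI z hz
  rw [hsz, hst] at hsub
  rw [hsz]
  refine hZ3 z hz c d (isOrbital_of_supp_eq hcd hsz) (hsub.ssubset_of_ne fun heq => ?_)
  exact hZ.2.2.1 z hz t ht hzt p q (isOrbital_of_supp_eq hpq (hsz.trans heq))
    (isOrbital_of_supp_eq hpq hst)

lemma IsNiceSet.exists_maximal_supp {Z : Finset PermR} (hZ : IsNiceSet Z)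
    (hI : ∀ z ∈ Z, ∃ a b, a < b ∧ Supp z = Ioo a b) {z₀ : PermR} (hz₀ : z₀ ∈ Z) {x : ℝ}
    (hx : x ∈ Supp z₀) :
    ∃ t ∈ Z, x ∈ Supp t ∧ ∀ z ∈ Z, Supp z ⊆ Supp t ∨ Disjoint (Supp z) (Supp t) := by
  classical
  obtain ⟨t, ht, hmax⟩ :=
    (Z.filter (x ∈ Supp ·)).exists_maximalFor Supp ⟨z₀, Finset.mem_filter.mpr ⟨hz₀, hx⟩⟩
  obtain ⟨htZ, hxt⟩ := Finset.mem_filter.mp ht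
  refine ⟨t, htZ, hxt, fun z hz => ?_⟩
  obtain ⟨a, b, hab, hsz⟩ := hI z hz
  obtain ⟨c, d, hcd, hst⟩ := hI t htZ
  rcases hZ.supp_nested_or_disjoint hz htZ hab hcd hsz hst with h | h | h
  · exact Or.inl h
  · exact Or.inl (hmax (Finset.mem_filter.mpr ⟨hz, h hxt⟩) h)
  · exact Or.inr h

end Nice

theorem IsNiceSet.factor_mem_closure (Z : Finset PermR) (hZ : IsNiceSet Z)
    (hPL : ∀ z ∈ Z, IsPL z) {f g : PermR} (hf : f ∈ closure (Z : Set PermR))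
    (hg : IsFactorOf g f) : g ∈ closure (Z : Set PermR) := by
  induction Z using Finset.strongInduction generalizing f g with
  | H Z IH =>
  classical
  obtain ⟨a, b, hg⟩ := hg
  have hI : ∀ z ∈ Z, ∃ a b, a < b ∧ Supp z = Ioo a b := fun z hz =>
    hZ.supp_eq_Ioo hz (hPL z hz)
  obtain ⟨x, hx⟩ := nonempty_Ioo.mpr hg.1.1
  obtain ⟨z₀, hz₀, hxz₀⟩ := mem_iUnion₂.mp (supp_subset_of_mem_closure hf (hg.1.2.1 hx))
  obtain ⟨t, ht, hxt, htop⟩ := hZ.exists_maximal_supp hI hz₀ hxz₀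
  obtain ⟨p, q, hpq, hsuppt⟩ := hI t ht
  set Zt := Z.filter (Supp · ⊆ Supp t)
  have htZt : t ∈ Zt := Finset.mem_filter.mpr ⟨ht, subset_rfl⟩
  obtain ⟨u, hu, hgu⟩ := exists_isOneBumpFactor_of_mem_closure_union (Y₁ := Zt)
    (Y₂ := (Z \ Zt : Finset PermR))
    (fun z hz => hsuppt ▸ (Finset.mem_filter.mp hz).2)
    (fun z hz => by
      obtain ⟨hzZ, hzt⟩ := Finset.mem_sdiff.mp hz
      refine subset_compl_Icc_of_disjoint (isOpen_supp (hPL z hzZ).1) hpq (hsuppt ▸ ?_)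
      exact (htop z hzZ).resolve_left fun h => hzt (Finset.mem_filter.mpr ⟨hzZ, h⟩))
    (by rwa [← Finset.coe_union, Finset.union_sdiff_of_subset (Finset.filter_subset _ _)])
    hg ⟨hx, hsuppt ▸ hxt⟩
  obtain ⟨r, hr, hZ3⟩ := hZ.exists_supp_subset_Ioo hI ht hpq hsuppt
  have hS : ∀ z ∈ (Zt.erase t : Set PermR), Supp z ⊆ Ioo r (ap t r) := fun z hz => by
    obtain ⟨hzt, hzZt⟩ := Finset.mem_erase.mp hz
    exact hZ3 z (Finset.mem_filter.mp hzZt).1 hzt (Finset.mem_filter.mp hzZt).2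
  have hlt : Zt.erase t ⊂ Z := (Finset.erase_ssubset htZt).trans_le (Finset.filter_subset _ _)
  have hins : insert t (Zt.erase t : Set PermR) = Zt := by
    rw [← Finset.coe_insert, Finset.insert_erase htZt]
  have hgZt := factor_mem_closure_insert (hPL t ht).1 hsuppt hr hS
    (fun f hf g hg => IH _ hlt (hZ.subset (Finset.coe_subset.mpr hlt.subset))
      (fun z hz => hPL z (hlt.subset hz)) hf hg) (hins ▸ hu) hgu
  exact closure_mono (Finset.coe_subset.mpr (Finset.filter_subset _ _)) (hins ▸ hgZt)

theorem statement16 (Z : Set PermR) (hZfin : Z.Finite) (hZnice : IsNiceSet Z)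
    (H : Subgroup PermR) (hH : H = Subgroup.closure Z)
    (hPL : ∀ g ∈ H, IsPL g) :
    SplitGroup H = H ∧ ∀ f ∈ H, ∀ g : PermR, IsFactorOf g f → g ∈ H := by
  subst hH
  have hfac : ∀ f ∈ closure Z, ∀ g, IsFactorOf g f → g ∈ closure Z := by
    lift Z to Finset PermR using hZfin
    exact fun f hf g hg =>
      hZnice.factor_mem_closure Z (fun z hz => hPL z (subset_closure hz)) hf hg
  refine ⟨le_antisymm ((closure_le _).mpr ?_) ((closure_le _).mpr fun z hz => ?_), hfac⟩
  · rintro g ⟨f, hf, hgf⟩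
    exact hfac f hf g hgf
  · obtain ⟨a, b, hab, hsupp⟩ := hZnice.supp_eq_Ioo hz (hPL z (subset_closure hz))
    exact subset_closure ⟨z, subset_closure hz, isFactorOf_self_of_supp_eq hab hsupp⟩

end PLPaper
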